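/- Let n be a positive integer and let S = [[λ, μ], [ν, ρ]] be a complex symplectic 2n×2n matrix (Sᵀ J S = J with J = [[0, I], [−I, 0]]) which maps K-positive vectors to K-positive vectors, i.e. for every v ∈ ℂ^{2n} with vᴴ K v > 0 one has (Sv)ᴴ K (Sv) > 0, where K = [[I, 0], [0, −I]]. Then: (a) λ is invertible; (b) νλ⁻¹ is symmetric; (c) I − (νλ⁻¹)ᴴ(νλ⁻¹) is positive definite (equivalently, the operator norm of νλ⁻¹ is strictly less than 1); and (d) ρ = (λ⁻¹)ᵀ + νλ⁻¹μ. -/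

import Mathlib

/-! Testing `K`-positivity on the vectors `(x, 0)` gives `‖νx‖² < ‖λx‖²` for `x ≠ 0`. This forces
`λ` to be injective, and after substituting `x = λu` it is the positive definiteness of
`I − (νλ⁻¹)ᴴ(νλ⁻¹)`. The other two claims are algebraic consequences of the `(1,1)` and `(1,2)`
blocks of `SᵀJS = J`, namely `λᵀν = νᵀλ` and `λᵀρ − νᵀμ = I`. -/

open Matrix
open scoped ComplexOrder

namespace Matrix

variable {m n R : Type*} [Fintype m] [Fintype n]

theorem fromBlocks_mulVec_sumElim_zero [NonUnitalNonAssocSemiring R]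
    (A : Matrix m m R) (B : Matrix m n R) (C : Matrix n m R) (D : Matrix n n R) (x : m → R) :
    fromBlocks A B C D *ᵥ Sum.elim x 0 = Sum.elim (A *ᵥ x) (C *ᵥ x) := by
  simp [fromBlocks_mulVec]

theorem star_sumElim_dotProduct_fromBlocks_one_neg_one_mulVec [DecidableEq m] [DecidableEq n]
    [Ring R] [StarRing R] (x : m → R) (y : n → R) :
    star (Sum.elim x y) ⬝ᵥ (fromBlocks (1 : Matrix m m R) 0 0 (-1) *ᵥ Sum.elim x y) =
      star x ⬝ᵥ x - star y ⬝ᵥ y := by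
  simp [fromBlocks_mulVec, Function.star_sumElim, sumElim_dotProduct_sumElim, neg_mulVec,
    sub_eq_add_neg]

theorem transpose_mul_fromBlocks_zero_one_neg_one_zero_mul_eq_iff [DecidableEq n] [CommRing R]
    (A B C D : Matrix n n R) :
    (fromBlocks A B C D)ᵀ * fromBlocks 0 1 (-1) 0 * fromBlocks A B C D = fromBlocks 0 1 (-1) 0 ↔
      Aᵀ * C = Cᵀ * A ∧ Aᵀ * D - Cᵀ * B = 1 ∧ Bᵀ * C - Dᵀ * A = -1 ∧ Bᵀ * D = Dᵀ * B := by
  simp only [fromBlocks_transpose, fromBlocks_multiply, fromBlocks_inj, Matrix.mul_zero,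
    Matrix.mul_one, Matrix.mul_neg, Matrix.neg_mul, zero_add, add_zero, neg_add_eq_sub, sub_eq_zero]

section CommRing

variable [DecidableEq n] [CommRing R] {A C : Matrix n n R}

theorem isSymm_mul_inv_of_transpose_mul_eq (hA : IsUnit A) (h : Aᵀ * C = Cᵀ * A) :
    (C * A⁻¹).IsSymm := by
  have hA' := (isUnit_iff_isUnit_det A).mp hA
  calc (C * A⁻¹)ᵀ = (A⁻¹)ᵀ * (Cᵀ * A) * A⁻¹ := by
        rw [transpose_mul, Matrix.mul_assoc, Matrix.mul_assoc, mul_nonsing_inv A hA',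
          Matrix.mul_one]
    _ = C * A⁻¹ := by
        rw [← h, ← Matrix.mul_assoc, ← transpose_mul, mul_nonsing_inv A hA', transpose_one,
          Matrix.one_mul]

theorem eq_transpose_inv_add_mul_inv_mul {B D : Matrix n n R}
    (hA : IsUnit A) (hAC : Aᵀ * C = Cᵀ * A) (hAD : Aᵀ * D - Cᵀ * B = 1) :
    D = (A⁻¹)ᵀ + C * A⁻¹ * B := by
  have hA' := (isUnit_iff_isUnit_det A).mp hA
  calc D = (A⁻¹)ᵀ * (Aᵀ * D) := by
        rw [← Matrix.mul_assoc, ← transpose_mul, mul_nonsing_inv A hA', transpose_one,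
          Matrix.one_mul]
    _ = (A⁻¹)ᵀ + (C * A⁻¹)ᵀ * B := by
        rw [eq_add_of_sub_eq hAD, Matrix.mul_add, Matrix.mul_one, transpose_mul, Matrix.mul_assoc]
    _ = (A⁻¹)ᵀ + C * A⁻¹ * B := by rw [(isSymm_mul_inv_of_transpose_mul_eq hA hAC).eq]

end CommRing

section Field

variable {𝕜 : Type*} [Field 𝕜] [StarRing 𝕜] [PartialOrder 𝕜] [StarOrderedRing 𝕜]

theorem star_mulVec_dotProduct_lt_of_preserves_pos [DecidableEq m] [DecidableEq n]
    {A : Matrix m m 𝕜} {B : Matrix m n 𝕜} {C : Matrix n m 𝕜} {D : Matrix n n 𝕜}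
    (hpos : ∀ v : m ⊕ n → 𝕜,
      0 < star v ⬝ᵥ (fromBlocks (1 : Matrix m m 𝕜) 0 0 (-1) *ᵥ v) →
      0 < star (fromBlocks A B C D *ᵥ v) ⬝ᵥ
        (fromBlocks (1 : Matrix m m 𝕜) 0 0 (-1) *ᵥ (fromBlocks A B C D *ᵥ v)))
    {x : m → 𝕜} (hx : x ≠ 0) :
    star (C *ᵥ x) ⬝ᵥ (C *ᵥ x) < star (A *ᵥ x) ⬝ᵥ (A *ᵥ x) := by
  have h := hpos (Sum.elim x 0)
  simp only [fromBlocks_mulVec_sumElim_zero A B C D,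
    star_sumElim_dotProduct_fromBlocks_one_neg_one_mulVec, star_zero, dotProduct_zero, sub_zero,
    sub_pos] at h
  exact h (dotProduct_star_self_pos_iff.mpr hx)

variable {A : Matrix n n 𝕜} {C : Matrix m n 𝕜}

theorem isUnit_of_star_mulVec_dotProduct_lt [DecidableEq n]
    (h : ∀ x ≠ 0, star (C *ᵥ x) ⬝ᵥ (C *ᵥ x) < star (A *ᵥ x) ⬝ᵥ (A *ᵥ x)) : IsUnit A := by
  rw [isUnit_iff_isUnit_det, isUnit_iff_ne_zero]
  intro hdet
  obtain ⟨x, hx, hAx⟩ := exists_mulVec_eq_zero_iff.mpr hdet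
  have := h x hx
  rw [hAx, dotProduct_zero] at this
  exact (dotProduct_star_self_nonneg (C *ᵥ x)).not_gt this

theorem posDef_one_sub_conjTranspose_mul_self_mul_inv [DecidableEq n] (hA : IsUnit A)
    (h : ∀ x ≠ 0, star (C *ᵥ x) ⬝ᵥ (C *ᵥ x) < star (A *ᵥ x) ⬝ᵥ (A *ᵥ x)) :
    (1 - (C * A⁻¹)ᴴ * (C * A⁻¹)).PosDef := by
  refine posDef_iff_dotProduct_mulVec.mpr ⟨by simp [IsHermitian], fun x hx ↦ ?_⟩
  have hAx : A *ᵥ (A⁻¹ *ᵥ x) = x := by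
    rw [mulVec_mulVec, mul_nonsing_inv A ((isUnit_iff_isUnit_det A).mp hA), one_mulVec]
  have hx' : A⁻¹ *ᵥ x ≠ 0 := fun h0 ↦ hx (by rw [← hAx, h0, mulVec_zero])
  have hnorm : star x ⬝ᵥ (((C * A⁻¹)ᴴ * (C * A⁻¹)) *ᵥ x) =
      star ((C * A⁻¹) *ᵥ x) ⬝ᵥ ((C * A⁻¹) *ᵥ x) := by
    rw [← mulVec_mulVec, dotProduct_mulVec, ← star_mulVec]
  rw [sub_mulVec, one_mulVec, dotProduct_sub, hnorm, sub_pos, ← mulVec_mulVec]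
  simpa only [hAx] using h _ hx'

end Field

end Matrix

theorem semigroup_element_block_properties_general (n : ℕ)
    (lam mu nu rho : Matrix (Fin n) (Fin n) ℂ)
    (hS : (fromBlocks lam mu nu rho)ᵀ *
        fromBlocks (0 : Matrix (Fin n) (Fin n) ℂ) (1 : Matrix (Fin n) (Fin n) ℂ)
          (-1 : Matrix (Fin n) (Fin n) ℂ) (0 : Matrix (Fin n) (Fin n) ℂ) *
        fromBlocks lam mu nu rho =
      fromBlocks (0 : Matrix (Fin n) (Fin n) ℂ) (1 : Matrix (Fin n) (Fin n) ℂ)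
        (-1 : Matrix (Fin n) (Fin n) ℂ) (0 : Matrix (Fin n) (Fin n) ℂ))
    (hpos : ∀ v : (Fin n ⊕ Fin n) → ℂ,
      0 < star v ⬝ᵥ ((fromBlocks (1 : Matrix (Fin n) (Fin n) ℂ) 0 0
          (-1 : Matrix (Fin n) (Fin n) ℂ)) *ᵥ v) →
      0 < star ((fromBlocks lam mu nu rho) *ᵥ v) ⬝ᵥ
        ((fromBlocks (1 : Matrix (Fin n) (Fin n) ℂ) 0 0
          (-1 : Matrix (Fin n) (Fin n) ℂ)) *ᵥ ((fromBlocks lam mu nu rho) *ᵥ v))) :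
    IsUnit lam ∧
    (nu * lam⁻¹)ᵀ = nu * lam⁻¹ ∧
    (1 - (nu * lam⁻¹)ᴴ * (nu * lam⁻¹)).PosDef ∧
    rho = (lam⁻¹)ᵀ + nu * lam⁻¹ * mu := by
  obtain ⟨hlam_nu, hlam_rho, -, -⟩ :=
    (transpose_mul_fromBlocks_zero_one_neg_one_zero_mul_eq_iff lam mu nu rho).mp hS
  have hlt : ∀ x ≠ 0, star (nu *ᵥ x) ⬝ᵥ (nu *ᵥ x) < star (lam *ᵥ x) ⬝ᵥ (lam *ᵥ x) :=
    fun _ hx ↦ star_mulVec_dotProduct_lt_of_preserves_pos hpos hx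
  have hlam : IsUnit lam := isUnit_of_star_mulVec_dotProduct_lt hlt
  exact ⟨hlam, (isSymm_mul_inv_of_transpose_mul_eq hlam hlam_nu).eq,
    posDef_one_sub_conjTranspose_mul_self_mul_inv hlam hlt,
    eq_transpose_inv_add_mul_inv_mul hlam hlam_nu hlam_rho⟩

/-- If `S = [[λ, μ], [ν, ρ]]` is complex symplectic and maps `K`-positive
vectors to `K`-positive vectors (`K = [[I, 0], [0, −I]]`), then `λ` is invertible,
`νλ⁻¹` is symmetric, `I − (νλ⁻¹)ᴴ(νλ⁻¹)` is positive definite, and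
`ρ = (λ⁻¹)ᵀ + νλ⁻¹μ`. -/
theorem semigroup_element_block_properties (n : ℕ) (hn : 0 < n)
    (lam mu nu rho : Matrix (Fin n) (Fin n) ℂ)
    (hS : (fromBlocks lam mu nu rho)ᵀ *
        fromBlocks (0 : Matrix (Fin n) (Fin n) ℂ) (1 : Matrix (Fin n) (Fin n) ℂ)
          (-1 : Matrix (Fin n) (Fin n) ℂ) (0 : Matrix (Fin n) (Fin n) ℂ) *
        fromBlocks lam mu nu rho =
      fromBlocks (0 : Matrix (Fin n) (Fin n) ℂ) (1 : Matrix (Fin n) (Fin n) ℂ)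
        (-1 : Matrix (Fin n) (Fin n) ℂ) (0 : Matrix (Fin n) (Fin n) ℂ))
    (hpos : ∀ v : (Fin n ⊕ Fin n) → ℂ,
      0 < star v ⬝ᵥ ((fromBlocks (1 : Matrix (Fin n) (Fin n) ℂ) 0 0
          (-1 : Matrix (Fin n) (Fin n) ℂ)) *ᵥ v) →
      0 < star ((fromBlocks lam mu nu rho) *ᵥ v) ⬝ᵥ
        ((fromBlocks (1 : Matrix (Fin n) (Fin n) ℂ) 0 0
          (-1 : Matrix (Fin n) (Fin n) ℂ)) *ᵥ ((fromBlocks lam mu nu rho) *ᵥ v))) :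
    IsUnit lam ∧
    (nu * lam⁻¹)ᵀ = nu * lam⁻¹ ∧
    (1 - (nu * lam⁻¹)ᴴ * (nu * lam⁻¹)).PosDef ∧
    rho = (lam⁻¹)ᵀ + nu * lam⁻¹ * mu :=
  semigroup_element_block_properties_general n lam mu nu rho hS hpos
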